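/- Every divergence-free element of the 3D BDM₁ space is the curl of an element of U_K: if u ∈ BDM₁(K) with div u = 0, then u = curl a for some a ∈ U_K. -/

import Mathlib

/-- partial derivatives of a function of three real variables -/
noncomputable def pd1 (f : ℝ → ℝ → ℝ → ℝ) (x y z : ℝ) : ℝ := deriv (fun t => f t y z) x
noncomputable def pd2 (f : ℝ → ℝ → ℝ → ℝ) (x y z : ℝ) : ℝ := deriv (fun t => f x t z) y
noncomputable def pd3 (f : ℝ → ℝ → ℝ → ℝ) (x y z : ℝ) : ℝ := deriv (fun t => f x y t) z

/-- the divergence of a 3D vector field -/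
noncomputable def dv3 (q : ℝ → ℝ → ℝ → (Fin 3 → ℝ)) : ℝ → ℝ → ℝ → ℝ :=
  fun x y z => pd1 (fun a b c => q a b c 0) x y z + pd2 (fun a b c => q a b c 1) x y z
    + pd3 (fun a b c => q a b c 2) x y z

/-- the curl of a 3D vector field -/
noncomputable def curl3 (u : ℝ → ℝ → ℝ → (Fin 3 → ℝ)) : ℝ → ℝ → ℝ → (Fin 3 → ℝ) :=
  fun x y z =>
    ![pd2 (fun a b c => u a b c 2) x y z - pd3 (fun a b c => u a b c 1) x y z,
      pd3 (fun a b c => u a b c 0) x y z - pd1 (fun a b c => u a b c 2) x y z,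
      pd1 (fun a b c => u a b c 1) x y z - pd2 (fun a b c => u a b c 0) x y z]

/-- The 3D `BDM₁` space
`P₁(K,ℝ³) + curl span{(0,0,xy²),(0,0,x²y),(y²z,0,0),(yz²,0,0),(0,xz²,0),(0,x²z,0)}`,
where `curl(0,0,xy²) = (2xy,−y²,0)`, `curl(0,0,x²y) = (x²,−2xy,0)`,
`curl(y²z,0,0) = (0,y²,−2yz)`, `curl(yz²,0,0) = (0,2yz,−z²)`,
`curl(0,xz²,0) = (−2xz,0,z²)`, `curl(0,x²z,0) = (−x²,0,2xz)`. -/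
def BDM13 : Set (ℝ → ℝ → ℝ → (Fin 3 → ℝ)) :=
  {q | ∃ a : Fin 3 → Fin 4 → ℝ, ∃ c1 c2 c3 c4 c5 c6 : ℝ, ∀ x y z : ℝ,
    q x y z =
      ![a 0 0 + a 0 1 * x + a 0 2 * y + a 0 3 * z
          + c1 * (2 * x * y) + c2 * x ^ 2 - c5 * (2 * x * z) - c6 * x ^ 2,
        a 1 0 + a 1 1 * x + a 1 2 * y + a 1 3 * z
          - c1 * y ^ 2 - c2 * (2 * x * y) + c3 * y ^ 2 + c4 * (2 * y * z),
        a 2 0 + a 2 1 * x + a 2 2 * y + a 2 3 * z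
          - c3 * (2 * y * z) - c4 * z ^ 2 + c5 * z ^ 2 + c6 * (2 * x * z)]}

/-- The space `U_K = P_{1,1,1}(ℝ³)³ +
span{y²z,yz²,y²,z²} × span{x²z,xz²,x²,z²} × span{x²y,xy²,x²,y²}`. -/
def UK : Set (ℝ → ℝ → ℝ → (Fin 3 → ℝ)) :=
  {u | ∃ b : Fin 3 → Fin 8 → ℝ, ∃ α1 α2 α3 α4 β1 β2 β3 β4 γ1 γ2 γ3 γ4 : ℝ, ∀ x y z : ℝ,
    u x y z =
      ![b 0 0 + b 0 1 * x + b 0 2 * y + b 0 3 * z + b 0 4 * x * y + b 0 5 * x * z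
          + b 0 6 * y * z + b 0 7 * x * y * z
          + α1 * y ^ 2 * z + α2 * y * z ^ 2 + α3 * y ^ 2 + α4 * z ^ 2,
        b 1 0 + b 1 1 * x + b 1 2 * y + b 1 3 * z + b 1 4 * x * y + b 1 5 * x * z
          + b 1 6 * y * z + b 1 7 * x * y * z
          + β1 * x ^ 2 * z + β2 * x * z ^ 2 + β3 * x ^ 2 + β4 * z ^ 2,
        b 2 0 + b 2 1 * x + b 2 2 * y + b 2 3 * z + b 2 4 * x * y + b 2 5 * x * z
          + b 2 6 * y * z + b 2 7 * x * y * z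
          + γ1 * x ^ 2 * y + γ2 * x * y ^ 2 + γ3 * x ^ 2 + γ4 * y ^ 2]}

/-!
The curl part of a `BDM₁` field is divergence free, so the divergence of the field is the
constant trace `a₀₁ + a₁₂ + a₂₃` of its affine part. Once that vanishes, the affine part `v`
has the potential `(0, ∫₀ˣ v₃, ∫₀ʸ v₁(0, s, z) ds - ∫₀ˣ v₂)`, and adding the six cubic
generators of the curl part gives an explicit potential, which lies in `U_K` by inspection.
-/

namespace BDM13

variable (a : Fin 3 → Fin 4 → ℝ) (c1 c2 c3 c4 c5 c6 : ℝ)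

def field : ℝ → ℝ → ℝ → (Fin 3 → ℝ) := fun x y z =>
  ![a 0 0 + a 0 1 * x + a 0 2 * y + a 0 3 * z
      + c1 * (2 * x * y) + c2 * x ^ 2 - c5 * (2 * x * z) - c6 * x ^ 2,
    a 1 0 + a 1 1 * x + a 1 2 * y + a 1 3 * z
      - c1 * y ^ 2 - c2 * (2 * x * y) + c3 * y ^ 2 + c4 * (2 * y * z),
    a 2 0 + a 2 1 * x + a 2 2 * y + a 2 3 * z
      - c3 * (2 * y * z) - c4 * z ^ 2 + c5 * z ^ 2 + c6 * (2 * x * z)]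

theorem exists_eq_field {q : ℝ → ℝ → ℝ → (Fin 3 → ℝ)} (hq : q ∈ BDM13) :
    ∃ (a : Fin 3 → Fin 4 → ℝ) (c1 c2 c3 c4 c5 c6 : ℝ), q = field a c1 c2 c3 c4 c5 c6 := by
  obtain ⟨a, c1, c2, c3, c4, c5, c6, hq⟩ := hq
  exact ⟨a, c1, c2, c3, c4, c5, c6, funext fun x => funext fun y => funext (hq x y)⟩

theorem dv3_field :
    dv3 (field a c1 c2 c3 c4 c5 c6) = fun _ _ _ => a 0 1 + a 1 2 + a 2 3 := by
  funext x y z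
  simp (disch := fun_prop) only [dv3, pd1, pd2, pd3, field, Matrix.cons_val,
    deriv_fun_add, deriv_fun_sub, deriv_fun_mul, deriv_fun_pow,
    deriv_const', deriv_const_mul_id', deriv_id'']
  ring

noncomputable def potential : ℝ → ℝ → ℝ → (Fin 3 → ℝ) := fun x y z =>
  ![c3 * y ^ 2 * z + c4 * y * z ^ 2,
    a 2 0 * x + a 2 1 / 2 * x ^ 2 + a 2 2 * x * y + a 2 3 * x * z
      + c5 * x * z ^ 2 + c6 * x ^ 2 * z,
    -(a 1 0) * x - a 1 1 / 2 * x ^ 2 - a 1 2 * x * y - a 1 3 * x * z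
      + a 0 0 * y + a 0 2 / 2 * y ^ 2 + a 0 3 * y * z + c1 * x * y ^ 2 + c2 * x ^ 2 * y]

theorem potential_mem_UK : potential a c1 c2 c3 c4 c5 c6 ∈ UK := by
  refine ⟨![![0, 0, 0, 0, 0, 0, 0, 0],
            ![0, a 2 0, 0, 0, a 2 2, a 2 3, 0, 0],
            ![0, -(a 1 0), a 0 0, 0, -(a 1 2), -(a 1 3), a 0 3, 0]],
          c3, c4, 0, 0, c6, c5, a 2 1 / 2, 0, c2, c1, -(a 1 1) / 2, a 0 2 / 2, fun x y z => ?_⟩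
  funext i
  fin_cases i <;>
    simp only [potential, Fin.zero_eta, Fin.mk_one, Fin.reduceFinMk, Matrix.cons_val] <;> ring

theorem curl3_potential (htr : a 0 1 + a 1 2 + a 2 3 = 0) :
    curl3 (potential a c1 c2 c3 c4 c5 c6) = field a c1 c2 c3 c4 c5 c6 := by
  funext x y z i
  fin_cases i <;>
    simp (disch := fun_prop) only [curl3, pd1, pd2, pd3, potential, field,
      Fin.zero_eta, Fin.mk_one, Fin.reduceFinMk, Matrix.cons_val,
      deriv_fun_add, deriv_fun_sub, deriv_fun_mul, deriv_fun_pow, deriv.fun_neg', deriv_div_const,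
      deriv_const', deriv_const_mul_id', deriv_id'']
  -- the first component of the curl has `x`-coefficient `-(a 1 2 + a 2 3)`
  · linear_combination (-x) * htr
  all_goals ring

end BDM13

/-- Every divergence-free element of the 3D `BDM₁` space is the curl of an
element of `U_K`. -/
theorem stmt_12 :
    ∀ u ∈ BDM13, dv3 u = (fun _ _ _ => 0) → ∃ a ∈ UK, u = curl3 a := by
  intro u hu hdiv
  obtain ⟨a, c1, c2, c3, c4, c5, c6, rfl⟩ := BDM13.exists_eq_field hu
  rw [BDM13.dv3_field] at hdiv
  have htr : a 0 1 + a 1 2 + a 2 3 = 0 := congrFun (congrFun (congrFun hdiv 0) 0) 0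
  exact ⟨_, BDM13.potential_mem_UK a c1 c2 c3 c4 c5 c6,
    (BDM13.curl3_potential a c1 c2 c3 c4 c5 c6 htr).symm⟩
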